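/- Let P be a finite set of n points in the Euclidean plane with n > 2. Then the number of distinct perpendicular bisectors determined by pairs of distinct points of P is at least n. -/

import Mathlib

/-- The perpendicular bisector of `a` and `b`, as a point set. -/
def bisector (a b : EuclideanSpace ℝ (Fin 2)) : Set (EuclideanSpace ℝ (Fin 2)) :=
  {x | dist x a = dist x b}

/-!
Identify the plane with `ℂ` and let `σ_{ab}` be the reflection in the bisector `B(a, b)`.
If `P` had fewer than `n` bisectors, then for every `a ∈ P` the `n - 1` distinct bisectors
`B(a, x)` would be all of them. Hence `P` would be closed under all the reflections `σ_{cd}`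
(as `B(c, d) = B(a, x)` gives `σ_{cd} a = x`), and no point of `P` would lie on a bisector of `P`.
But for distinct `a, b, c ∈ P` the point `e = σ_{ac} σ_{bc} a ∈ P` is as far from `a` as `b` is,
so `a ∈ B(b, e)` unless `e = b`; and `e = b` means that the triangle `abc` has a right angle
at `c`. Exchanging `b` and `c`, one of the two choices works.
-/

open ComplexConjugate

section Bisectors

variable {X Y : Type*} [MetricSpace X] [MetricSpace Y]

def metricBisector (a b : X) : Set X := {x | dist x a = dist x b}

@[simp]
lemma mem_metricBisector {a b x : X} : x ∈ metricBisector a b ↔ dist x a = dist x b :=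
  Iff.rfl

def bisectors (P : Set X) : Set (Set X) :=
  {L | ∃ a ∈ P, ∃ b ∈ P, a ≠ b ∧ L = metricBisector a b}

lemma Set.Finite.bisectors {P : Set X} (hP : P.Finite) : (bisectors P).Finite :=
  ((hP.prod hP).image fun p => metricBisector p.1 p.2).subset <| by
    rintro L ⟨a, ha, b, hb, -, rfl⟩
    exact ⟨(a, b), ⟨ha, hb⟩, rfl⟩

lemma IsometryEquiv.image_metricBisector (e : X ≃ᵢ Y) (a b : X) :
    e '' metricBisector a b = metricBisector (e a) (e b) := by
  ext y
  rw [← e.preimage_symm, Set.mem_preimage, mem_metricBisector, mem_metricBisector,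
    ← e.dist_eq, ← e.dist_eq, e.apply_symm_apply]

lemma IsometryEquiv.ncard_bisectors_image (e : X ≃ᵢ Y) (P : Set X) :
    (bisectors (e '' P)).ncard = (bisectors P).ncard := by
  have : bisectors (e '' P) = Set.image e '' bisectors P := by
    ext L
    constructor
    · rintro ⟨_, ⟨a, ha, rfl⟩, _, ⟨b, hb, rfl⟩, hab, rfl⟩
      exact ⟨_, ⟨a, ha, b, hb, ne_of_apply_ne e hab, rfl⟩, e.image_metricBisector a b⟩
    · rintro ⟨_, ⟨a, ha, b, hb, hab, rfl⟩, rfl⟩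
      exact ⟨e a, ⟨a, ha, rfl⟩, e b, ⟨b, hb, rfl⟩, e.injective.ne hab,
        e.image_metricBisector a b⟩
  rw [this, Set.ncard_image_of_injective _ (Set.image_injective.2 e.injective)]

end Bisectors

lemma eq_of_inner_sub_eq_zero_of_inner_sub_eq_zero {V : Type*} [NormedAddCommGroup V]
    [InnerProductSpace ℝ V] {a b c : V} (hc : inner ℝ (a - c) (b - c) = 0)
    (hb : inner ℝ (a - b) (c - b) = 0) : b = c := by
  have : ‖b - c‖ ^ 2 = inner ℝ (a - c) (b - c) + inner ℝ (a - b) (c - b) := by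
    rw [← real_inner_self_eq_norm_sq, ← neg_sub b c, inner_neg_right, ← sub_eq_add_neg,
      ← inner_sub_left, sub_sub_sub_cancel_left]
  rwa [hc, hb, add_zero, sq_eq_zero_iff, norm_eq_zero, sub_eq_zero] at this

namespace Complex

/-- The orientation-reversing isometry exchanging `a` and `b`, i.e. the reflection in their
perpendicular bisector (constant `b` when `a = b`). -/
noncomputable def perpReflection (a b z : ℂ) : ℂ := b - (b - a) / conj (b - a) * conj (z - a)

variable {P : Set ℂ} {a b c d z : ℂ}

lemma conj_sub_ne_zero (h : a ≠ b) : conj (b - a) ≠ 0 :=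
  (map_ne_zero _).2 (sub_ne_zero.2 h.symm)

@[simp]
lemma perpReflection_left (a b : ℂ) : perpReflection a b a = b := by
  simp [perpReflection]

lemma perpReflection_sub_perpReflection (a b z w : ℂ) :
    perpReflection a b z - perpReflection a b w = -((b - a) / conj (b - a) * conj (z - w)) := by
  simp only [perpReflection, map_sub]
  ring

lemma isometry_perpReflection (h : a ≠ b) : Isometry (perpReflection a b) := by
  refine Isometry.of_dist_eq fun z w => ?_
  rw [dist_eq, dist_eq, perpReflection_sub_perpReflection, norm_neg, norm_mul, norm_div,
    norm_conj, norm_conj, div_self (norm_ne_zero_iff.2 (sub_ne_zero.2 h.symm)), one_mul]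

lemma perpReflection_perpReflection (h : a ≠ b) (z : ℂ) :
    perpReflection a b (perpReflection a b z) = z := by
  have := conj_sub_ne_zero h
  simp only [perpReflection, map_sub, map_mul, map_div₀, conj_conj] at this ⊢
  field_simp
  ring

lemma perpReflection_sub_self_mul (h : a ≠ b) (z : ℂ) :
    (perpReflection a b z - z) * conj (b - a) = (‖z - b‖ ^ 2 - ‖z - a‖ ^ 2 : ℝ) := by
  have := conj_sub_ne_zero h
  push_cast
  rw [← mul_conj', ← mul_conj']
  simp only [perpReflection, map_sub] at this ⊢
  field_simp
  ring

lemma perpReflection_eq_self_iff (h : a ≠ b) :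
    perpReflection a b z = z ↔ z ∈ metricBisector a b := by
  rw [← sub_eq_zero, ← mul_left_inj' (conj_sub_ne_zero h), zero_mul,
    perpReflection_sub_self_mul h, ofReal_eq_zero, sub_eq_zero, mem_metricBisector, dist_eq,
    dist_eq, eq_comm]
  exact sq_eq_sq₀ (norm_nonneg _) (norm_nonneg _)

lemma perpReflection_eq_of_eqOn_pair {p q : ℂ} (hpq : p ≠ q)
    (hp : perpReflection a b p = perpReflection c d p)
    (hq : perpReflection a b q = perpReflection c d q) :
    perpReflection a b = perpReflection c d := by
  have expand : ∀ a b z, perpReflection a b z =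
      perpReflection a b p - (b - a) / conj (b - a) * conj (z - p) := fun a b z => by
    linear_combination perpReflection_sub_perpReflection a b z p
  have hu : (b - a) / conj (b - a) = (d - c) / conj (d - c) := by
    rw [expand a b q, expand c d q, hp] at hq
    exact mul_right_cancel₀ (conj_sub_ne_zero hpq) (sub_right_injective hq)
  funext z
  rw [expand a b z, expand c d z, hp, hu]

lemma perpReflection_eq_of_metricBisector_eq (hab : a ≠ b) (hcd : c ≠ d)
    (h : metricBisector a b = metricBisector c d) : perpReflection a b = perpReflection c d := by
  have hu := conj_sub_ne_zero hab
  have fixed : ∀ z, perpReflection a b z = z → perpReflection a b z = perpReflection c d z :=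
    fun z hz => by
      rw [hz, eq_comm, perpReflection_eq_self_iff hcd, ← h, ← perpReflection_eq_self_iff hab, hz]
  refine perpReflection_eq_of_eqOn_pair (p := (a + b) / 2) (q := (a + b) / 2 + I * (b - a))
    ?_ (fixed _ ?_) (fixed _ ?_)
  · simpa [sub_eq_zero] using hab.symm
  · simp only [perpReflection, map_sub, map_div₀, map_add, map_ofNat] at hu ⊢
    field_simp
    ring
  · simp only [perpReflection, map_sub, map_div₀, map_add, map_mul, map_ofNat, conj_I] at hu ⊢
    field_simp
    ring

lemma inner_eq_zero_of_perpReflection_eq (hab : a ≠ b) (hac : a ≠ c) (hbc : b ≠ c)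
    (h : perpReflection b c a = perpReflection a c b) : inner ℝ (a - c) (b - c) = 0 := by
  have hca := conj_sub_ne_zero hac
  have hcb := conj_sub_ne_zero hbc
  have hsum : (c - b) / conj (c - b) + (c - a) / conj (c - a) = 0 := by
    refine mul_right_cancel₀ (conj_sub_ne_zero hab.symm) ?_
    simp only [perpReflection, map_sub] at h ⊢
    linear_combination -h
  have hre : (b - c) * conj (a - c) + conj ((b - c) * conj (a - c)) = 0 := by
    simp only [map_sub, map_mul, conj_conj] at hca hcb hsum ⊢
    field_simp at hsum
    linear_combination hsum
  rw [add_conj, ofReal_eq_zero, mul_eq_zero] at hre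
  rw [Complex.inner]
  exact hre.resolve_left two_ne_zero

lemma injOn_metricBisector (a : ℂ) : Set.InjOn (metricBisector a) {a}ᶜ := fun x hx y hy h => by
  rw [← perpReflection_left a x, ← perpReflection_left a y,
    perpReflection_eq_of_metricBisector_eq (Ne.symm hx) (Ne.symm hy) h]

lemma bisectors_eq_image_of_ncard_lt (hlt : (bisectors P).ncard < P.ncard) (ha : a ∈ P) :
    bisectors P = metricBisector a '' (P \ {a}) := by
  have hP : P.Finite := Set.finite_of_ncard_pos (by omega)
  refine (Set.eq_of_subset_of_ncard_le ?_ ?_ hP.bisectors).symm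
  · rintro _ ⟨x, ⟨hx, hxa⟩, rfl⟩
    exact ⟨a, ha, x, hx, Ne.symm hxa, rfl⟩
  · rw [((injOn_metricBisector a).mono (Set.sdiff_subset_compl _ _)).ncard_image,
      Set.ncard_sdiff_singleton_of_mem ha]
    omega

lemma perpReflection_mem_of_ncard_lt (hlt : (bisectors P).ncard < P.ncard) {y : ℂ}
    (hy : y ∈ P) (hc : c ∈ P) (hd : d ∈ P) (hcd : c ≠ d) : perpReflection c d y ∈ P := by
  obtain ⟨x, ⟨hx, hxy⟩, hL⟩ : metricBisector c d ∈ metricBisector y '' (P \ {y}) :=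
    bisectors_eq_image_of_ncard_lt hlt hy ▸ ⟨c, hc, d, hd, hcd, rfl⟩
  rwa [perpReflection_eq_of_metricBisector_eq hcd (Ne.symm hxy) hL.symm, perpReflection_left]

lemma exists_mem_bisectors_of_perpReflection_ne
    (hP : ∀ y ∈ P, ∀ c ∈ P, ∀ d ∈ P, c ≠ d → perpReflection c d y ∈ P)
    (ha : a ∈ P) (hb : b ∈ P) (hc : c ∈ P) (hac : a ≠ c) (hbc : b ≠ c)
    (hne : perpReflection b c a ≠ perpReflection a c b) : ∃ L ∈ bisectors P, a ∈ L := by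
  set e := perpReflection a c (perpReflection b c a)
  have he : perpReflection a c e = perpReflection b c a := perpReflection_perpReflection hac _
  have heb : b ≠ e := fun h => hne (by rw [← he, h])
  refine ⟨_, ⟨b, hb, e, hP _ (hP a ha b hb c hc hbc) a ha c hc hac, heb, rfl⟩, ?_⟩
  calc dist a b = dist (perpReflection b c a) (perpReflection b c b) :=
        ((isometry_perpReflection hbc).dist_eq a b).symm
    _ = dist (perpReflection a c a) (perpReflection a c e) := by
        rw [perpReflection_left, perpReflection_left, he, dist_comm]
    _ = dist a e := (isometry_perpReflection hac).dist_eq a e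

lemma exists_mem_bisectors
    (hP : ∀ y ∈ P, ∀ c ∈ P, ∀ d ∈ P, c ≠ d → perpReflection c d y ∈ P)
    (ha : a ∈ P) (hb : b ∈ P) (hc : c ∈ P) (hab : a ≠ b) (hac : a ≠ c) (hbc : b ≠ c) :
    ∃ L ∈ bisectors P, a ∈ L := by
  by_cases hne : perpReflection b c a = perpReflection a c b
  · refine exists_mem_bisectors_of_perpReflection_ne hP ha hc hb hab hbc.symm fun h => hbc ?_
    exact eq_of_inner_sub_eq_zero_of_inner_sub_eq_zero
      (inner_eq_zero_of_perpReflection_eq hab hac hbc hne)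
      (inner_eq_zero_of_perpReflection_eq hac hab hbc.symm h)
  · exact exists_mem_bisectors_of_perpReflection_ne hP ha hb hc hac hbc hne

theorem ncard_le_ncard_bisectors (h : 2 < P.ncard) : P.ncard ≤ (bisectors P).ncard := by
  by_contra! hlt
  obtain ⟨a, ha, b, hb, c, hc, hab, hac, hbc⟩ :=
    (Set.two_lt_ncard (Set.finite_of_ncard_pos (by omega))).1 h
  obtain ⟨L, hL, haL⟩ := exists_mem_bisectors
    (fun _ hy _ hc _ hd hcd => perpReflection_mem_of_ncard_lt hlt hy hc hd hcd) ha hb hc hab hac hbc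
  rw [bisectors_eq_image_of_ncard_lt hlt ha] at hL
  obtain ⟨x, ⟨-, hxa⟩, rfl⟩ := hL
  rw [mem_metricBisector, dist_self, eq_comm, dist_eq_zero] at haL
  exact hxa haL.symm

end Complex

theorem num_bisectors_ge_card (P : Finset (EuclideanSpace ℝ (Fin 2))) (h : 2 < P.card) :
    P.card ≤ Set.ncard {L : Set (EuclideanSpace ℝ (Fin 2)) |
      ∃ a ∈ P, ∃ b ∈ P, a ≠ b ∧ L = bisector a b} := by
  let e : ℂ ≃ᵢ EuclideanSpace ℝ (Fin 2) := Complex.orthonormalBasisOneI.repr.toIsometryEquiv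
  have hP : (P : Set (EuclideanSpace ℝ (Fin 2))) = e '' (e.symm '' P) := by
    rw [Set.image_image]; simp
  rw [← Set.ncard_coe_finset] at h ⊢
  change _ ≤ (bisectors (P : Set (EuclideanSpace ℝ (Fin 2)))).ncard
  rw [hP, e.ncard_bisectors_image, Set.ncard_image_of_injective _ e.injective]
  rw [hP, Set.ncard_image_of_injective _ e.injective] at h
  exact Complex.ncard_le_ncard_bisectors h
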